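/- arXiv:1904.03347 — 3 statements merged into one kernel-verified Lean document; each statement's English description precedes it below -/
import Mathlib

section
/- (Property 4) Let C be an initial configuration of the BRP satisfying the condition of Property 4, i.e., in every experiment that relocates each block above the target block exactly once onto one of the other stacks, at least one of the relocated blocks ends badly placed. Then every feasible move sequence for C contains at least one non-BG relocation of a block of 𝔅⁴; that is, f_nonBG(𝔅⁴) ≥ 1. -/
/-!
Suppose a feasible sequence makes no non-BG relocation of a block of `𝔅⁴`. Then a block of `𝔅⁴`
that is well placed never moves again: in particular the minimum of each stack other than `s*`
stays put, and so does every block of `A` once it has left `s*`, since that relocation is BG and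
leaves it well placed. All of `A` has to leave `s*` before `t` can be retrieved. When a block
of `A` lands, being well placed, it is no larger than the minimum of its destination's original
contents and than the blocks of `A` that landed there before it. So the destinations chosen by
the sequence form an experiment in which every relocated block is well placed, which the
condition of Property 4 forbids. The bound on `f_nonBG` follows once some feasible sequence
exists, which two stacks guarantee.
-/

/-- A configuration of the BRP: each stack holds a list of blocks, bottom to top. -/
abbrev Config (B S : ℕ) := Fin S → List (Fin B)

/-- Every block occurs exactly once among the stacks. -/
def IsConfig {B S : ℕ} (C : Config B S) : Prop :=
  ∀ b : Fin B, (∑ s : Fin S, (C s).count b) = 1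

/-- `a` lies strictly below `b` in stack `s` of `C`. -/
def StrictlyBelow {B S : ℕ} (C : Config B S) (s : Fin S) (a b : Fin B) : Prop :=
  ∃ i j : ℕ, i < j ∧ (C s)[i]? = some a ∧ (C s)[j]? = some b

/-- A block is badly placed if some smaller-labelled block lies below it in its stack. -/
def BadlyPlaced {B S : ℕ} (C : Config B S) (b : Fin B) : Prop :=
  ∃ s a, a < b ∧ StrictlyBelow C s a b

/-- Moves: retrieve the top block of a stack, or relocate the top block of one
stack onto another stack. -/
inductive Move (S : ℕ) where
  | retrieve (s : Fin S)
  | relocate (src dst : Fin S)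

def applyMove {B S : ℕ} (C : Config B S) : Move S → Config B S
  | .retrieve s => Function.update C s (C s).dropLast
  | .relocate src dst =>
    match (C src).getLast? with
    | some b =>
      let C' := Function.update C src (C src).dropLast
      Function.update C' dst (C' dst ++ [b])
    | none => C

def Enabled {B S : ℕ} (C : Config B S) : Move S → Prop
  | .retrieve s => ∃ b, (C s).getLast? = some b ∧ ∀ (s' : Fin S), ∀ b' ∈ C s', b ≤ b'
  | .relocate src dst => src ≠ dst ∧ C src ≠ []

def play {B S : ℕ} (C : Config B S) : List (Move S) → Config B S
  | [] => C
  | m :: ms => play (applyMove C m) ms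

def AllEnabled {B S : ℕ} (C : Config B S) : List (Move S) → Prop
  | [] => True
  | m :: ms => Enabled C m ∧ AllEnabled (applyMove C m) ms

/-- A feasible move sequence: every move is enabled and at the end all blocks
have been retrieved. -/
def Feasible {B S : ℕ} (C : Config B S) (ms : List (Move S)) : Prop :=
  AllEnabled C ms ∧ ∀ s, play C ms s = []

/-- `b` is the block moved by `m` (a relocation) performed in configuration `C`. -/
def MovedBlock {B S : ℕ} (C : Config B S) (m : Move S) (b : Fin B) : Prop :=
  ∃ src dst, m = .relocate src dst ∧ src ≠ dst ∧ (C src).getLast? = some b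

/-- The four types of relocation moves. -/
inductive MType where
  | BB | BG | GB | GG

/-- The relocation `m`, moving block `b` from configuration `C`, has the given type. -/
def MTypeOf {B S : ℕ} (C : Config B S) (m : Move S) (b : Fin B) : MType → Prop
  | .BB => BadlyPlaced C b ∧ BadlyPlaced (applyMove C m) b
  | .BG => BadlyPlaced C b ∧ ¬ BadlyPlaced (applyMove C m) b
  | .GB => ¬ BadlyPlaced C b ∧ BadlyPlaced (applyMove C m) b
  | .GG => ¬ BadlyPlaced C b ∧ ¬ BadlyPlaced (applyMove C m) b

/-- `m` is a relocation of a block of `𝔅`. -/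
def RelocIn {B S : ℕ} (𝔅 : Set (Fin B)) (C : Config B S) (m : Move S) : Prop :=
  ∃ b ∈ 𝔅, MovedBlock C m b

/-- `m` is a relocation of a block of `𝔅` of type `mt`. -/
def RelocTypeIn {B S : ℕ} (mt : MType) (𝔅 : Set (Fin B)) (C : Config B S) (m : Move S) : Prop :=
  ∃ b ∈ 𝔅, MovedBlock C m b ∧ MTypeOf C m b mt

/-- `m` is a non-BG relocation of a block of `𝔅`. -/
def RelocNonBGIn {B S : ℕ} (𝔅 : Set (Fin B)) (C : Config B S) (m : Move S) : Prop :=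
  ∃ b ∈ 𝔅, MovedBlock C m b ∧ ¬ MTypeOf C m b MType.BG

/-- Count the moves of a sequence satisfying `P` (evaluated in the configuration
in which each move is performed). -/
noncomputable def countMoves {B S : ℕ} (P : Config B S → Move S → Prop) :
    Config B S → List (Move S) → ℕ
  | _, [] => 0
  | C, m :: ms =>
    (@ite ℕ (P C m) (Classical.propDecidable _) 1 0) + countMoves P (applyMove C m) ms

/-- Minimum over feasible move sequences of the number of moves satisfying `P`. -/
noncomputable def fMin {B S : ℕ} (C : Config B S) (P : Config B S → Move S → Prop) : ℕ :=
  sInf { n | ∃ ms, Feasible C ms ∧ countMoves P C ms = n }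

/-- `f(𝔅)`: least number of relocations applied to blocks of `𝔅`. -/
noncomputable def fRel {B S : ℕ} (C : Config B S) (𝔅 : Set (Fin B)) : ℕ :=
  fMin C (RelocIn 𝔅)

/-- `f_mt(𝔅)`: least number of type-`mt` relocations applied to blocks of `𝔅`. -/
noncomputable def fTyp {B S : ℕ} (C : Config B S) (mt : MType) (𝔅 : Set (Fin B)) : ℕ :=
  fMin C (RelocTypeIn mt 𝔅)

/-- `f_nonBG(𝔅)`: least number of non-BG relocations applied to blocks of `𝔅`. -/
noncomputable def fNonBG {B S : ℕ} (C : Config B S) (𝔅 : Set (Fin B)) : ℕ :=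
  fMin C (RelocNonBGIn 𝔅)

/-- The top 1st layer: the topmost block of each stack. -/
def TopLayer {B S : ℕ} (C : Config B S) : Set (Fin B) :=
  {b | ∃ s, (C s).getLast? = some b}

/-- The top `k` layers: the topmost `k` blocks of every stack. -/
def TopK {B S : ℕ} (C : Config B S) (k : ℕ) : Set (Fin B) :=
  {b | ∃ s, b ∈ (C s).drop ((C s).length - k)}

/-- The top `j`-th layer: the `j`-th block from the top of every stack. -/
def TopJth {B S : ℕ} (C : Config B S) (j : ℕ) : Set (Fin B) :=
  {b | ∃ s, (C s)[(C s).length - j]? = some b}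

/-- A virtual layer: a set of blocks containing exactly one block from each stack. -/
def VirtualLayer {B S : ℕ} (C : Config B S) (V : Set (Fin B)) : Prop :=
  ∀ s : Fin S, ∃! b : Fin B, b ∈ V ∧ b ∈ C s

/-- `a` lies at or below the `V`-block of stack `s`. -/
def AtOrBelowLayer {B S : ℕ} (C : Config B S) (V : Set (Fin B)) (s : Fin S) (a : Fin B) : Prop :=
  ∃ b j, b ∈ V ∧ (C s)[j]? = some b ∧ a ∈ (C s).take (j + 1)

/-- `V` is a virtual layer satisfying the conditions of Property 5:
(1) in some stack, a block strictly below the `V`-block of that stack has a smaller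
label than every block of `V`; (2) every badly placed block of `V` has a label
strictly greater than the minimum label present in stack `s` after deleting all
blocks strictly above the `V`-block of `s`, for every stack `s`. -/
def P5 {B S : ℕ} (C : Config B S) (V : Set (Fin B)) : Prop :=
  VirtualLayer C V ∧
  (∃ s a b, b ∈ V ∧ StrictlyBelow C s a b ∧ ∀ c ∈ V, a < c) ∧
  (∀ b ∈ V, BadlyPlaced C b → ∀ s : Fin S, ∃ a, AtOrBelowLayer C V s a ∧ a < b)

/-- A pair of virtual layers `V₁` (upper), `V₂` (lower) with shared well-placed
block `bstar` satisfying the conditions of Property 7. -/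
def P7 {B S : ℕ} (C : Config B S) (V₁ V₂ : Set (Fin B)) (bstar : Fin B) : Prop :=
  V₁ ∩ V₂ = {bstar} ∧
  ¬ BadlyPlaced C bstar ∧
  (∀ s : Fin S, bstar ∉ C s →
    ∃ b₁ b₂, b₁ ∈ V₁ ∧ b₂ ∈ V₂ ∧ StrictlyBelow C s b₂ b₁) ∧
  P5 C V₁ ∧ P5 C V₂ ∧
  (∀ s : Fin S, ∃ a, AtOrBelowLayer C V₁ s a ∧ a ≤ bstar) ∧
  (∃ s : Fin S, ∀ a, AtOrBelowLayer C V₁ s a → bstar ≤ a)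

/-- Push blocks one by one onto the indicated stacks. -/
def pushAll {B S : ℕ} (C : Config B S) : List (Fin B × Fin S) → Config B S
  | [] => C
  | p :: rest => pushAll (Function.update C p.2 (C p.2 ++ [p.1])) rest

/-- The blocks lying strictly above position `i` of stack `s`, listed from the
top of the stack downward (the processing order of the experiment). -/
def aboveList {B S : ℕ} (C : Config B S) (s : Fin S) (i : ℕ) : List (Fin B) :=
  ((C s).drop (i + 1)).reverse

/-- The arrangement resulting from the experiment of Property 4: the blocks above
position `i` of stack `s` are relocated exactly once, from the top downward, onto
the stacks listed in `ds`. -/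
def expResult {B S : ℕ} (C : Config B S) (s : Fin S) (i : ℕ) (ds : List (Fin S)) :
    Config B S :=
  pushAll (Function.update C s ((C s).take (i + 1))) ((aboveList C s i).zip ds)

/-- The condition of Property 4 (target block at position `i` of stack `sStar`):
in every experiment, some relocated block ends badly placed. -/
def P4Cond {B S : ℕ} (C : Config B S) (sStar : Fin S) (i : ℕ) : Prop :=
  ∀ ds : List (Fin S), ds.length = (aboveList C sStar i).length →
    (∀ d ∈ ds, d ≠ sStar) →
    ∃ b ∈ aboveList C sStar i, BadlyPlaced (expResult C sStar i ds) b

/-- The set `𝔅⁴`: the blocks above the target block together with, for each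
nonempty stack other than the target's stack, its block of minimum label. -/
def B4Set {B S : ℕ} (C : Config B S) (sStar : Fin S) (i : ℕ) : Set (Fin B) :=
  {b | b ∈ aboveList C sStar i} ∪
  {b | ∃ s, s ≠ sStar ∧ b ∈ C s ∧ ∀ b' ∈ C s, b ≤ b'}

/-- The number of direct blockages: adjacent pairs in a stack whose upper block
has a strictly larger label. -/
def directBlockages {B S : ℕ} (C : Config B S) : ℕ :=
  ∑ s : Fin S, (((C s).zip (C s).tail).filter (fun p => decide (p.1 < p.2))).length

/-- The number of relocations in a move sequence. -/
def relocCount {S : ℕ} (ms : List (Move S)) : ℕ :=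
  (ms.filter (fun m => match m with | Move.relocate _ _ => true | Move.retrieve _ => false)).length

/-- The minimum number of relocations over all feasible move sequences. -/
noncomputable def fAll {B S : ℕ} (C : Config B S) : ℕ :=
  sInf { n | ∃ ms, Feasible C ms ∧ relocCount ms = n }

/-- `g(L)`: `L` plus the minimum number of direct blockages over all partial
plans with exactly `L` relocations. -/
noncomputable def gIter {B S : ℕ} (C : Config B S) (L : ℕ) : ℕ :=
  L + sInf { d | ∃ ms : List (Move S), AllEnabled C ms ∧ relocCount ms = L ∧
      d = directBlockages (play C ms) }

namespace BRP

variable {B S : ℕ}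

section Lists

variable {α : Type*}

theorem _root_.List.zip_concat_of_length_lt {β : Type*} (l : List α) {ds : List β} (d : β)
    (h : ds.length < l.length) : l.zip (ds ++ [d]) = l.zip ds ++ [(l[ds.length], d)] := by
  induction ds generalizing l with
  | nil =>
    cases l with
    | nil => simp at h
    | cons x l => simp
  | cons d' ds ih =>
    cases l with
    | nil => simp at h
    | cons x l => simpa using ih l (by simpa using h)

def WellPlacedIn [LE α] (l : List α) (b : α) : Prop :=
  ∃ p q, l = p ++ b :: q ∧ ∀ x ∈ p, b ≤ x

variable [LE α] {l : List α} {a b : α}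

theorem WellPlacedIn.mem (h : WellPlacedIn l b) : b ∈ l := by
  obtain ⟨p, q, rfl, -⟩ := h
  simp

theorem WellPlacedIn.append (h : WellPlacedIn l b) (l' : List α) : WellPlacedIn (l ++ l') b := by
  obtain ⟨p, q, rfl, hp⟩ := h
  exact ⟨p, q ++ l', by simp, hp⟩

theorem WellPlacedIn.dropLast (h : WellPlacedIn l b) (hb : l.getLast? ≠ some b) :
    WellPlacedIn l.dropLast b := by
  obtain ⟨p, q, rfl, hp⟩ := h
  rcases List.eq_nil_or_concat q with rfl | ⟨q', c, rfl⟩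
  · simp at hb
  · refine ⟨p, q', ?_, hp⟩
    rw [List.concat_eq_append, ← List.cons_append, ← List.append_assoc, List.dropLast_concat]

theorem wellPlacedIn_of_forall_le (hb : b ∈ l) (h : ∀ x ∈ l, b ≤ x) : WellPlacedIn l b := by
  obtain ⟨p, q, rfl⟩ := List.append_of_mem hb
  exact ⟨p, q, rfl, fun x hx => h x (by simp [hx])⟩

theorem wellPlacedIn_concat (h : ∀ x ∈ l, a ≤ x) : WellPlacedIn (l ++ [a]) a :=
  ⟨l, [], rfl, h⟩

end Lists

def push (D : Config B S) (d : Fin S) (a : Fin B) : Config B S :=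
  Function.update D d (D d ++ [a])

theorem push_apply (D : Config B S) (d : Fin S) (a : Fin B) (s : Fin S) :
    push D d a s = if s = d then D d ++ [a] else D s := by
  by_cases h : s = d <;> simp [push, h]

theorem WellPlacedIn.push {D : Config B S} {s : Fin S} {b : Fin B}
    (h : WellPlacedIn (D s) b) (d : Fin S) (a : Fin B) : WellPlacedIn (push D d a s) b := by
  rw [push_apply]
  split_ifs with hs
  · exact hs ▸ h.append [a]
  · exact h

theorem applyMove_relocate {D : Config B S} {src : Fin S} {c : Fin B}
    (hc : (D src).getLast? = some c) (dst : Fin S) :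
    applyMove D (.relocate src dst) = push (Function.update D src (D src).dropLast) dst c := by
  simp [applyMove, hc, push]

theorem WellPlacedIn.relocate {D : Config B S} {s src : Fin S} {y c : Fin B}
    (h : WellPlacedIn (D s) y) (hc : (D src).getLast? = some c) (hyc : y ≠ c) (dst : Fin S) :
    WellPlacedIn (applyMove D (.relocate src dst) s) y := by
  rw [applyMove_relocate hc]
  refine WellPlacedIn.push ?_ dst c
  by_cases hs : s = src
  · subst hs
    simpa using h.dropLast (by rwa [hc, ne_eq, Option.some_inj, eq_comm])
  · rwa [Function.update_of_ne hs]

section Sums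

variable (φ : List (Fin B) → ℕ)

theorem sum_update_add (D : Config B S) (s : Fin S) (l : List (Fin B)) :
    ∑ s', φ (Function.update D s l s') + φ (D s) = ∑ s', φ (D s') + φ l := by
  simp only [Function.apply_update (fun _ => φ)]
  rw [Finset.sum_update_of_mem (Finset.mem_univ s), ← Finset.add_sum_erase _ _ (Finset.mem_univ s),
    Finset.sdiff_singleton_eq_erase]
  ring

variable {φ} (hφ : ∀ l₁ l₂, φ (l₁ ++ l₂) = φ l₁ + φ l₂)
include hφ

theorem sum_push (D : Config B S) (d : Fin S) (a : Fin B) :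
    ∑ s, φ (push D d a s) = ∑ s, φ (D s) + φ [a] := by
  have := sum_update_add φ D d (D d ++ [a])
  rw [hφ] at this
  unfold push
  omega

theorem sum_pushAll (D : Config B S) (ps : List (Fin B × Fin S)) :
    ∑ s, φ (pushAll D ps s) = ∑ s, φ (D s) + φ (ps.map Prod.fst) := by
  induction ps generalizing D with
  | nil => simpa [pushAll] using (hφ [] []).symm
  | cons p ps ih =>
    have hcons : φ (p.1 :: ps.map Prod.fst) = φ [p.1] + φ (ps.map Prod.fst) := hφ [p.1] _
    rw [List.map_cons, hcons, ← add_assoc, ← sum_push hφ]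
    exact ih _

theorem sum_update_dropLast {D : Config B S} {s : Fin S} {c : Fin B}
    (hc : (D s).getLast? = some c) :
    ∑ s', φ (Function.update D s (D s).dropLast s') + φ [c] = ∑ s', φ (D s') := by
  have hsplit : φ (D s) = φ (D s).dropLast + φ [c] := by
    rw [← hφ, List.dropLast_append_getLast? c hc]
  have := sum_update_add φ D s (D s).dropLast
  omega

theorem sum_applyMove_le {D : Config B S} {m : Move S} (hm : Enabled D m) :
    ∑ s, φ (applyMove D m s) ≤ ∑ s, φ (D s) := by
  cases m with
  | retrieve s =>
    obtain ⟨c, hc, -⟩ := hm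
    exact le_of_add_le_of_nonneg_left (sum_update_dropLast hφ hc).le (Nat.zero_le _)
  | relocate src dst =>
    obtain ⟨c, hc⟩ := Option.ne_none_iff_exists'.1 (mt List.getLast?_eq_none_iff.1 hm.2)
    rw [applyMove_relocate hc, sum_push hφ, sum_update_dropLast hφ hc]

end Sums

theorem feasible_cons {D : Config B S} {m : Move S} {ms : List (Move S)} :
    Feasible D (m :: ms) ↔ Enabled D m ∧ Feasible (applyMove D m) ms :=
  and_assoc

def AtMostOnce (D : Config B S) : Prop :=
  ∀ b, ∑ s, (D s).count b ≤ 1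

namespace AtMostOnce

variable {D : Config B S}

theorem nodup (h : AtMostOnce D) (s : Fin S) : (D s).Nodup :=
  List.nodup_iff_count_le_one.2 fun b =>
    (Finset.single_le_sum (f := fun s => (D s).count b) (by simp) (Finset.mem_univ s)).trans (h b)

theorem eq_of_mem (h : AtMostOnce D) {b : Fin B} {s s' : Fin S} (hs : b ∈ D s) (hs' : b ∈ D s') :
    s = s' := by
  by_contra hne
  have htwo := Finset.add_le_sum (f := fun s => (D s).count b) (by simp) (Finset.mem_univ s)
    (Finset.mem_univ s') hne
  have := List.count_pos_iff.2 hs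
  have := List.count_pos_iff.2 hs'
  have := h b
  omega

theorem applyMove (h : AtMostOnce D) {m : Move S} (hm : Enabled D m) :
    AtMostOnce (applyMove D m) := fun b =>
  (sum_applyMove_le (fun _ _ => List.count_append) hm).trans (h b)

theorem not_badlyPlaced (h : AtMostOnce D) {s : Fin S} {b : Fin B} (hb : WellPlacedIn (D s) b) :
    ¬ BadlyPlaced D b := by
  rintro ⟨s', x, hxb, j, k, hjk, hx, hb'⟩
  obtain rfl := h.eq_of_mem hb.mem (List.mem_of_getElem? hb')
  obtain ⟨p, q, hpq, hp⟩ := hb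
  have hk : k = p.length := by
    have hlen : p.length < (D s).length := by simp [hpq]
    refine ((List.getElem?_inj hlen (h.nodup s)).1 ?_).symm
    rw [hb', hpq, List.getElem?_append_right le_rfl, Nat.sub_self, List.getElem?_cons_zero]
  rw [hpq, List.getElem?_append_left (hk ▸ hjk)] at hx
  exact (hp x (List.mem_of_getElem? hx)).not_gt hxb

end AtMostOnce

theorem le_of_not_badlyPlaced_concat {D : Config B S} {d : Fin S} {a : Fin B} {l : List (Fin B)}
    (hD : D d = l ++ [a]) (ha : ¬ BadlyPlaced D a) : ∀ x ∈ l, a ≤ x := by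
  intro x hx
  by_contra hlt
  obtain ⟨n, hn, rfl⟩ := List.mem_iff_getElem.1 hx
  refine ha ⟨d, _, not_le.1 hlt, n, l.length, hn, ?_, ?_⟩
  · rw [hD, List.getElem?_append_left hn, List.getElem?_eq_getElem hn]
  · rw [hD, List.getElem?_concat_length]

section Experiment

variable {C : Config B S} {sStar : Fin S} {i : ℕ}

theorem pushAll_append (D : Config B S) (ps qs : List (Fin B × Fin S)) :
    pushAll D (ps ++ qs) = pushAll (pushAll D ps) qs := by
  induction ps generalizing D with
  | nil => rfl
  | cons p ps ih => exact ih _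

theorem expResult_nil :
    expResult C sStar i [] = Function.update C sStar ((C sStar).take (i + 1)) := by
  simp [expResult, pushAll]

theorem expResult_concat {ds : List (Fin S)} (h : ds.length < (aboveList C sStar i).length)
    (d : Fin S) :
    expResult C sStar i (ds ++ [d]) =
      push (expResult C sStar i ds) d (aboveList C sStar i)[ds.length] := by
  rw [expResult, List.zip_concat_of_length_lt _ _ h, pushAll_append]
  rfl

theorem atMostOnce_expResult (hC : IsConfig C) {ds : List (Fin S)}
    (hds : ds.length = (aboveList C sStar i).length) : AtMostOnce (expResult C sStar i ds) := by
  intro b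
  have hcount : ∀ l₁ l₂ : List (Fin B), (l₁ ++ l₂).count b = l₁.count b + l₂.count b :=
    fun _ _ => List.count_append
  have hsplit : (C sStar).count b = ((C sStar).take (i + 1)).count b +
      (aboveList C sStar i).count b := by
    rw [aboveList, List.count_reverse, ← hcount, List.take_append_drop]
  have := sum_update_add (fun l => l.count b) C sStar ((C sStar).take (i + 1))
  rw [expResult, sum_pushAll hcount, List.map_fst_zip hds.ge]
  have := hC b
  omega

end Experiment

/-- State reached from `C` by moves none of which is a non-BG relocation of a block of `𝔅⁴`,
while the target block is still present: the first `ds.length` blocks of `A` have been relocated,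
to the stacks `ds`, and `E` has since been put on the target stack. By `floor`, every block of the
corresponding partial experiment lies above a block of `𝔅⁴` that is no larger and well placed
in `D`, hence can never move again. -/
structure TracksExperiment (C : Config B S) (sStar : Fin S) (i : ℕ) (D : Config B S)
    (ds : List (Fin S)) (E : List (Fin B)) : Prop where
  atMostOnce : AtMostOnce D
  length_le : ds.length ≤ (aboveList C sStar i).length
  dest_ne : ∀ d ∈ ds, d ≠ sStar
  target_stack : D sStar =
    (C sStar).take (i + 1) ++ ((aboveList C sStar i).drop ds.length).reverse ++ E
  floor : ∀ s ≠ sStar, ∀ x ∈ expResult C sStar i ds s,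
    ∃ y ∈ B4Set C sStar i, y ≤ x ∧ WellPlacedIn (D s) y
  placed : ∀ b ∈ (aboveList C sStar i).take ds.length,
    ∃ s, WellPlacedIn (expResult C sStar i ds s) b

namespace TracksExperiment

variable {C D : Config B S} {sStar : Fin S} {i : ℕ} {ds : List (Fin S)} {E : List (Fin B)}

theorem init (hC : IsConfig C) : TracksExperiment C sStar i C [] [] where
  atMostOnce b := (hC b).le
  length_le := Nat.zero_le _
  dest_ne := by simp
  target_stack := by simp [aboveList]
  floor s hs x hx := by
    rw [expResult_nil, Function.update_of_ne hs] at hx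
    obtain ⟨y, hy, hmin⟩ := (C s).toFinset.exists_min_image id ⟨x, List.mem_toFinset.2 hx⟩
    rw [List.mem_toFinset] at hy
    have hmin' : ∀ z ∈ C s, y ≤ z := fun z hz => hmin z (List.mem_toFinset.2 hz)
    exact ⟨y, Or.inr ⟨s, hs, hy, hmin'⟩, hmin' x hx, wellPlacedIn_of_forall_le hy hmin'⟩
  placed := by simp

theorem length_lt (h : TracksExperiment C sStar i D ds E) (hC : IsConfig C)
    (h4 : P4Cond C sStar i) : ds.length < (aboveList C sStar i).length := by
  refine h.length_le.lt_of_ne fun hlen => ?_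
  obtain ⟨b, hb, hbad⟩ := h4 ds hlen h.dest_ne
  obtain ⟨s, hs⟩ := h.placed b (by rwa [hlen, List.take_length])
  exact (atMostOnce_expResult hC hlen).not_badlyPlaced hs hbad

theorem target_stack_eq_cons (h : TracksExperiment C sStar i D ds E) {t : Fin B}
    (hloc : (C sStar)[i]? = some t) :
    D sStar = (C sStar).take i ++ t :: (((aboveList C sStar i).drop ds.length).reverse ++ E) := by
  rw [h.target_stack, List.take_add_one, hloc]
  simp

theorem not_enabled_retrieve (h : TracksExperiment C sStar i D ds E) (hC : IsConfig C)
    (h4 : P4Cond C sStar i) {t : Fin B} (ht : ∀ b, t ≤ b) (hloc : (C sStar)[i]? = some t)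
    (s : Fin S) : ¬ Enabled D (.retrieve s) := by
  rintro ⟨b, hb, hmin⟩
  set R := ((aboveList C sStar i).drop ds.length).reverse ++ E
  have hR : R ≠ [] := by
    simp [R, List.drop_eq_nil_iff, (h.length_lt hC h4).not_ge]
  have hD := h.target_stack_eq_cons hloc
  have htD : t ∈ D sStar := by simp [hD]
  obtain rfl : b = t := le_antisymm (hmin sStar t htD) (ht b)
  obtain rfl := h.atMostOnce.eq_of_mem (List.mem_of_getLast? hb) htD
  have htR : b ∈ R := by
    rw [hD, ← List.singleton_append, ← List.append_assoc, List.getLast?_append_of_ne_nil _ hR] at hb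
    exact List.mem_of_getLast? hb
  have hnodup := h.atMostOnce.nodup s
  rw [hD, ← List.singleton_append, ← List.append_assoc, List.nodup_append] at hnodup
  exact hnodup.2.2 b (by simp) b htR rfl

variable {src dst : Fin S} {c : Fin B}

theorem wellPlacedIn_relocate (h : TracksExperiment C sStar i D ds E)
    (hnon : ¬ RelocNonBGIn (B4Set C sStar i) D (.relocate src dst)) (hsd : src ≠ dst)
    (hc : (D src).getLast? = some c) {s : Fin S} {y : Fin B} (hy : y ∈ B4Set C sStar i)
    (hys : WellPlacedIn (D s) y) : WellPlacedIn (applyMove D (.relocate src dst) s) y := by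
  refine hys.relocate hc (fun hyc => hnon ⟨c, hyc ▸ hy, ⟨src, dst, rfl, hsd, hc⟩, ?_⟩) dst
  exact fun hbg => h.atMostOnce.not_badlyPlaced hys (hyc ▸ hbg.1)

theorem floor_relocate (h : TracksExperiment C sStar i D ds E)
    (hnon : ¬ RelocNonBGIn (B4Set C sStar i) D (.relocate src dst)) (hsd : src ≠ dst)
    (hc : (D src).getLast? = some c) :
    ∀ s ≠ sStar, ∀ x ∈ expResult C sStar i ds s,
      ∃ y ∈ B4Set C sStar i, y ≤ x ∧ WellPlacedIn (applyMove D (.relocate src dst) s) y :=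
  fun s hs x hx =>
    let ⟨y, hy, hyx, hys⟩ := h.floor s hs x hx
    ⟨y, hy, hyx, h.wellPlacedIn_relocate hnon hsd hc hy hys⟩

theorem relocate_of_not_next (h : TracksExperiment C sStar i D ds E)
    (hnon : ¬ RelocNonBGIn (B4Set C sStar i) D (.relocate src dst)) (hsd : src ≠ dst)
    (hc : (D src).getLast? = some c) (hnext : src = sStar → E ≠ []) :
    ∃ E', TracksExperiment C sStar i (applyMove D (.relocate src dst)) ds E' := by
  have hD : applyMove D (.relocate src dst) = _ := applyMove_relocate hc dst
  obtain ⟨E', hE'⟩ : ∃ E', applyMove D (.relocate src dst) sStar =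
      (C sStar).take (i + 1) ++ ((aboveList C sStar i).drop ds.length).reverse ++ E' := by
    by_cases hsrc : src = sStar
    · subst hsrc
      refine ⟨E.dropLast, ?_⟩
      rw [hD, push_apply, if_neg hsd, Function.update_self, h.target_stack,
        List.dropLast_append_of_ne_nil (hnext rfl)]
    · by_cases hdst : dst = sStar
      · subst hdst
        refine ⟨E ++ [c], ?_⟩
        rw [hD, push_apply, if_pos rfl, Function.update_of_ne (Ne.symm hsrc), h.target_stack]
        simp
      · refine ⟨E, ?_⟩
        rw [hD, push_apply, if_neg (Ne.symm hdst), Function.update_of_ne (Ne.symm hsrc),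
          h.target_stack]
  exact ⟨E', h.atMostOnce.applyMove ⟨hsd, List.ne_nil_of_mem (List.mem_of_getLast? hc)⟩,
    h.length_le, h.dest_ne, hE', h.floor_relocate hnon hsd hc, h.placed⟩

theorem placed_concat (h : TracksExperiment C sStar i D ds E)
    (hlt : ds.length < (aboveList C sStar i).length) (hdst : dst ≠ sStar)
    (hle : ∀ x ∈ D dst, (aboveList C sStar i)[ds.length] ≤ x) :
    ∀ b ∈ (aboveList C sStar i).take (ds ++ [dst]).length,
      ∃ s, WellPlacedIn (expResult C sStar i (ds ++ [dst]) s) b := by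
  intro b hb
  rw [List.length_append, List.length_singleton, List.take_add_one,
    List.getElem?_eq_getElem hlt] at hb
  rw [expResult_concat hlt]
  rcases List.mem_append.1 hb with hb | hb
  · obtain ⟨s, hs⟩ := h.placed b hb
    exact ⟨s, hs.push _ _⟩
  · obtain rfl : b = (aboveList C sStar i)[ds.length] := by simpa using hb
    refine ⟨dst, ?_⟩
    rw [push_apply, if_pos rfl]
    refine wellPlacedIn_concat fun x hx => ?_
    obtain ⟨y, -, hyx, hys⟩ := h.floor dst hdst x hx
    exact (hle y hys.mem).trans hyx

theorem relocate_next (h : TracksExperiment C sStar i D ds []) (hC : IsConfig C)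
    (h4 : P4Cond C sStar i) (hnon : ¬ RelocNonBGIn (B4Set C sStar i) D (.relocate sStar dst))
    (hsd : sStar ≠ dst) (hc : (D sStar).getLast? = some c) :
    TracksExperiment C sStar i (applyMove D (.relocate sStar dst)) (ds ++ [dst]) [] := by
  have hlt : ds.length < (aboveList C sStar i).length := h.length_lt hC h4
  have hstack : D sStar = (C sStar).take (i + 1) ++
      ((aboveList C sStar i).drop (ds.length + 1)).reverse ++
        [(aboveList C sStar i)[ds.length]] := by
    rw [h.target_stack, List.drop_eq_getElem_cons hlt]
    simp
  have hca : c = (aboveList C sStar i)[ds.length] := by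
    rw [hstack, List.getLast?_concat] at hc
    exact (Option.some_inj.1 hc).symm
  rw [← hca] at hstack
  have hA : c ∈ B4Set C sStar i := Or.inl (hca ▸ List.getElem_mem hlt)
  have hD : applyMove D (.relocate sStar dst) = _ := applyMove_relocate hc dst
  have hdst : applyMove D (.relocate sStar dst) dst = D dst ++ [c] := by
    rw [hD, push_apply, if_pos rfl, Function.update_of_ne hsd.symm]
  have hc_le : ∀ x ∈ D dst, c ≤ x := by
    refine le_of_not_badlyPlaced_concat hdst fun hbad => ?_
    exact hnon ⟨c, hA, ⟨sStar, dst, rfl, hsd, hc⟩, fun hbg => hbg.2 hbad⟩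
  refine ⟨h.atMostOnce.applyMove ⟨hsd, List.ne_nil_of_mem (List.mem_of_getLast? hc)⟩,
    by simpa using hlt, ?_, ?_, ?_, h.placed_concat hlt hsd.symm (hca ▸ hc_le)⟩
  · simp only [List.mem_append, List.mem_singleton]
    rintro d (hd | rfl)
    exacts [h.dest_ne d hd, hsd.symm]
  · rw [hD, push_apply, if_neg hsd, Function.update_self, hstack, List.dropLast_concat]
    simp
  · intro s hs x hx
    rw [expResult_concat hlt, ← hca, push_apply] at hx
    split_ifs at hx with hsdst
    · subst hsdst
      rcases List.mem_append.1 hx with hx | hx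
      · exact h.floor_relocate hnon hsd hc s hs x hx
      · obtain rfl := List.mem_singleton.1 hx
        exact ⟨x, hA, le_rfl, hdst ▸ wellPlacedIn_concat hc_le⟩
    · exact h.floor_relocate hnon hsd hc s hs x hx

theorem step (h : TracksExperiment C sStar i D ds E) (hC : IsConfig C) (h4 : P4Cond C sStar i)
    {t : Fin B} (ht : ∀ b, t ≤ b) (hloc : (C sStar)[i]? = some t) {m : Move S}
    (hm : Enabled D m) (hnon : ¬ RelocNonBGIn (B4Set C sStar i) D m) :
    ∃ ds' E', TracksExperiment C sStar i (applyMove D m) ds' E' := by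
  cases m with
  | retrieve s => exact absurd hm (h.not_enabled_retrieve hC h4 ht hloc s)
  | relocate src dst =>
    obtain ⟨hsd, hne⟩ := hm
    obtain ⟨c, hc⟩ := Option.ne_none_iff_exists'.1 (mt List.getLast?_eq_none_iff.1 hne)
    by_cases hnext : src = sStar ∧ E = []
    · obtain ⟨rfl, rfl⟩ := hnext
      exact ⟨_, _, h.relocate_next hC h4 hnon hsd hc⟩
    · obtain ⟨E', h'⟩ := h.relocate_of_not_next hnon hsd hc fun hsrc hE => hnext ⟨hsrc, hE⟩
      exact ⟨_, _, h'⟩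

theorem countMoves_ne_zero (h : TracksExperiment C sStar i D ds E) (hC : IsConfig C)
    (h4 : P4Cond C sStar i) {t : Fin B} (ht : ∀ b, t ≤ b) (hloc : (C sStar)[i]? = some t)
    {ms : List (Move S)} (hms : Feasible D ms) :
    countMoves (RelocNonBGIn (B4Set C sStar i)) D ms ≠ 0 := by
  induction ms generalizing D ds E with
  | nil =>
    have hnil : D sStar = [] := hms.2 sStar
    simp [h.target_stack_eq_cons hloc] at hnil
  | cons m ms ih =>
    obtain ⟨hm, hms⟩ := feasible_cons.1 hms
    intro h0
    rw [countMoves, Nat.add_eq_zero_iff] at h0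
    obtain ⟨hite, h0⟩ := h0
    have hnon : ¬ RelocNonBGIn (B4Set C sStar i) D m := fun hP => by simp [hP] at hite
    obtain ⟨ds', E', h'⟩ := h.step hC h4 ht hloc hm hnon
    exact ih h' hms h0

end TracksExperiment

section Feasibility

variable {D : Config B S}

def total (D : Config B S) : ℕ :=
  ∑ s, (D s).length

theorem exists_mem_of_mem_applyMove {m : Move S} (hm : Enabled D m) {s : Fin S} {x : Fin B}
    (hx : x ∈ applyMove D m s) : ∃ s', x ∈ D s' := by
  have hle := sum_applyMove_le (φ := List.count x) (fun _ _ => List.count_append) hm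
  have hpos : 0 < ∑ s, (applyMove D m s).count x :=
    (List.count_pos_iff.2 hx).trans_le
      (Finset.single_le_sum (f := fun s => (applyMove D m s).count x) (by simp) (Finset.mem_univ s))
  obtain ⟨s', -, hs'⟩ := Finset.exists_ne_zero_of_sum_ne_zero (hpos.trans_le hle).ne'
  exact ⟨s', List.count_pos_iff.1 (Nat.pos_of_ne_zero hs')⟩

theorem total_applyMove_retrieve {s : Fin S} {c : Fin B} (hc : (D s).getLast? = some c) :
    total (applyMove D (.retrieve s)) + 1 = total D := by
  have := sum_update_dropLast (φ := List.length) (fun _ _ => List.length_append) hc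
  rwa [List.length_singleton] at this

theorem exists_feasible_of_min_mem (hS : 2 ≤ S) {N : ℕ}
    (hN : ∀ D' : Config B S, total D' < N → ∃ ms, Feasible D' ms) {s : Fin S} {b : Fin B}
    (hD : total D ≤ N) (hb : b ∈ D s) (hmin : ∀ s', ∀ x ∈ D s', b ≤ x) :
    ∃ ms, Feasible D ms := by
  induction hlen : (D s).length generalizing D with
  | zero => simp [List.length_eq_zero_iff.1 hlen] at hb
  | succ n ih =>
    obtain ⟨c, hc⟩ := Option.ne_none_iff_exists'.1
      (mt List.getLast?_eq_none_iff.1 (List.ne_nil_of_mem hb))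
    by_cases hcb : c = b
    · subst hcb
      have hm : Enabled D (.retrieve s) := ⟨c, hc, hmin⟩
      obtain ⟨ms, hms⟩ := hN (applyMove D (.retrieve s))
        (by have := total_applyMove_retrieve hc; omega)
      exact ⟨_, feasible_cons.2 ⟨hm, hms⟩⟩
    · have : Nontrivial (Fin S) := Fin.nontrivial_iff_two_le.2 hS
      obtain ⟨s', hs'⟩ := exists_ne s
      have hm : Enabled D (.relocate s s') := ⟨hs'.symm, List.ne_nil_of_mem hb⟩
      have hsrc : applyMove D (.relocate s s') s = (D s).dropLast := by
        rw [applyMove_relocate hc, push_apply, if_neg hs'.symm, Function.update_self]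
      rw [← List.dropLast_append_getLast? c hc, List.mem_append, List.mem_singleton] at hb
      obtain ⟨ms, hms⟩ := ih ((sum_applyMove_le (fun _ _ => List.length_append) hm).trans hD)
        (hsrc ▸ hb.resolve_right (Ne.symm hcb))
        (fun _ x hx => let ⟨s₀, hx₀⟩ := exists_mem_of_mem_applyMove hm hx; hmin s₀ x hx₀)
        (by rw [hsrc, List.length_dropLast, hlen, Nat.add_sub_cancel])
      exact ⟨_, feasible_cons.2 ⟨hm, hms⟩⟩

theorem exists_feasible (hS : 2 ≤ S) (D : Config B S) : ∃ ms, Feasible D ms := by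
  induction hN : total D using Nat.strong_induction_on generalizing D with
  | _ N ih =>
    by_cases hempty : ∀ s, D s = []
    · exact ⟨[], trivial, hempty⟩
    obtain ⟨s₀, hs₀⟩ := not_forall.1 hempty
    obtain ⟨b, hb, hmin⟩ := (Finset.univ.filter fun b : Fin B => ∃ s, b ∈ D s).exists_min_image id
      ⟨(D s₀).head hs₀, Finset.mem_filter.2 ⟨Finset.mem_univ _, s₀, List.head_mem hs₀⟩⟩
    obtain ⟨s, hs⟩ := (Finset.mem_filter.1 hb).2
    exact exists_feasible_of_min_mem hS (fun D' hD' => ih _ hD' D' rfl) hN.le hs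
      fun s' x hx => hmin x (Finset.mem_filter.2 ⟨Finset.mem_univ _, s', hx⟩)

end Feasibility

theorem le_fMin {C : Config B S} {P : Config B S → Move S → Prop} {n : ℕ}
    (hex : ∃ ms, Feasible C ms) (h : ∀ ms, Feasible C ms → n ≤ countMoves P C ms) :
    n ≤ fMin C P := by
  obtain ⟨ms, hms⟩ := hex
  exact le_csInf ⟨_, ms, hms, rfl⟩ (by rintro _ ⟨ms, hms, rfl⟩; exact h ms hms)

end BRP

theorem brp_property4_general {B S : ℕ} (hS : 2 ≤ S)
    (C : Config B S) (hC : IsConfig C)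
    (sStar : Fin S) (i : ℕ) (t : Fin B)
    (ht : ∀ b, t ≤ b) (hloc : (C sStar)[i]? = some t)
    (h4 : P4Cond C sStar i) :
    (∀ ms, Feasible C ms → 1 ≤ countMoves (RelocNonBGIn (B4Set C sStar i)) C ms) ∧
    1 ≤ fNonBG C (B4Set C sStar i) := by
  have hpos : ∀ ms, Feasible C ms → 1 ≤ countMoves (RelocNonBGIn (B4Set C sStar i)) C ms :=
    fun ms hms => Nat.one_le_iff_ne_zero.2 <|
      (BRP.TracksExperiment.init hC).countMoves_ne_zero hC h4 ht hloc hms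
  exact ⟨hpos, BRP.le_fMin (BRP.exists_feasible hS C) hpos⟩

/-- Property 4: if the target block `t` (the block of minimum
label) sits at position `i` of stack `sStar` and `C` satisfies the condition of
Property 4 (in every experiment relocating each block above `t` exactly once onto
the other stacks, some relocated block ends badly placed), then every feasible
move sequence contains at least one non-BG relocation of a block of `𝔅⁴`;
that is, `f_nonBG(𝔅⁴) ≥ 1`. -/
theorem brp_property4 {B S : ℕ} (hS : 2 ≤ S) (hB : 1 ≤ B)
    (C : Config B S) (hC : IsConfig C)
    (sStar : Fin S) (i : ℕ) (t : Fin B)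
    (ht : ∀ b, t ≤ b) (hloc : (C sStar)[i]? = some t)
    (h4 : P4Cond C sStar i) :
    (∀ ms, Feasible C ms → 1 ≤ countMoves (RelocNonBGIn (B4Set C sStar i)) C ms) ∧
    1 ≤ fNonBG C (B4Set C sStar i) :=
  brp_property4_general hS C hC sStar i t ht hloc h4
end

section
/- (Theorem 3, Property 5) Let C be an initial configuration of the BRP in which every stack is nonempty, and let V be a virtual layer of C satisfying the conditions of Property 5. Then every feasible move sequence for C contains at least one non-BG relocation of a block of V; that is, f_nonBG(V) ≥ 1. -/
/-!
Cut every stack of `C` just above its `V`-block; the lower parts form a base `P`. As long as no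
block of `V` has been relocated, the current configuration is `P` with blocks outside `V` piled on
top of it. No block of `V` can be retrieved meanwhile, because the block promised by condition (1)
is smaller than all of `V` and sits in the base. So every feasible sequence relocates a block `b`
of `V` at some point, and that move is not BG: if `b` is badly placed, the blockage lies in the
base, so `b` is badly placed in `C` and condition (2) puts a smaller block into the base of the
destination stack, below `b`.
-/

theorem List.IsPrefix.getElem?_eq_some {α : Type*} {l₁ l₂ : List α} (h : l₁ <+: l₂) {i : ℕ}
    {a : α} (hi : l₁[i]? = some a) : l₂[i]? = some a := by
  obtain ⟨t, rfl⟩ := h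
  rwa [List.getElem?_append_left (List.getElem?_eq_some_iff.1 hi).1]

section Relocation

variable {B S : ℕ}

theorem StrictlyBelow.of_prefix {D C : Config B S} {s : Fin S} {a b : Fin B} (h : D s <+: C s)
    (hab : StrictlyBelow D s a b) : StrictlyBelow C s a b := by
  obtain ⟨i, k, hik, ha, hb⟩ := hab
  exact ⟨i, k, hik, h.getElem?_eq_some ha, h.getElem?_eq_some hb⟩

theorem BadlyPlaced.of_prefix {D C : Config B S} {b : Fin B} (h : ∀ s, D s <+: C s)
    (hb : BadlyPlaced D b) : BadlyPlaced C b := by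
  obtain ⟨s, a, hab, hbelow⟩ := hb
  exact ⟨s, a, hab, StrictlyBelow.of_prefix (h s) hbelow⟩

theorem StrictlyBelow.atOrBelowLayer {C : Config B S} {V : Set (Fin B)} {s : Fin S}
    {a b : Fin B} (hab : StrictlyBelow C s a b) (hb : b ∈ V) : AtOrBelowLayer C V s a := by
  obtain ⟨i, k, hik, ha, hbk⟩ := hab
  refine ⟨b, k, hb, hbk, List.mem_iff_getElem?.2 ⟨i, ?_⟩⟩
  rwa [List.getElem?_take, if_pos (by omega)]

theorem IsConfig.nodup {C : Config B S} (hC : IsConfig C) (s : Fin S) : (C s).Nodup :=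
  List.nodup_iff_count_le_one.2 fun b => hC b ▸
    Finset.single_le_sum (f := fun t => (C t).count b) (fun _ _ => Nat.zero_le _)
      (Finset.mem_univ s)

theorem IsConfig.eq_of_getElem? {C : Config B S} (hC : IsConfig C) {s : Fin S} {i k : ℕ}
    {b : Fin B} (hi : (C s)[i]? = some b) (hk : (C s)[k]? = some b) : i = k :=
  (List.getElem?_inj (List.getElem?_eq_some_iff.1 hi).1 (IsConfig.nodup hC s)).1 (hi.trans hk.symm)

theorem applyMove_relocate {D : Config B S} {src dst : Fin S} {b : Fin B}
    (htop : (D src).getLast? = some b) (hne : src ≠ dst) :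
    applyMove D (.relocate src dst) =
      Function.update (Function.update D src (D src).dropLast) dst (D dst ++ [b]) := by
  simp [applyMove, htop, Function.update_of_ne hne.symm]

theorem badlyPlaced_applyMove_relocate {D : Config B S} {src dst : Fin S} {a b : Fin B}
    (htop : (D src).getLast? = some b) (hne : src ≠ dst) (ha : a ∈ D dst) (hab : a < b) :
    BadlyPlaced (applyMove D (.relocate src dst)) b := by
  obtain ⟨i, hi⟩ := List.mem_iff_getElem?.1 ha
  have hilt := (List.getElem?_eq_some_iff.1 hi).1
  refine ⟨dst, a, hab, i, (D dst).length, hilt, ?_, ?_⟩ <;>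
    rw [applyMove_relocate htop hne, Function.update_self]
  · rwa [List.getElem?_append_left hilt]
  · exact List.getElem?_concat_length

def HasBase (P : Config B S) (V : Set (Fin B)) (D : Config B S) : Prop :=
  ∀ s, ∃ R, D s = P s ++ R ∧ ∀ x ∈ R, x ∉ V

/-- The conditions of Property 5 for the base `P`, with `V` as its top layer. -/
structure Property5Base (P : Config B S) (V : Set (Fin B)) : Prop where
  getLast?_mem : ∀ s, ∃ c ∈ V, (P s).getLast? = some c
  exists_lt : ∃ s, ∃ a ∈ P s, ∀ c ∈ V, a < c
  exists_lt_of_badlyPlaced : ∀ b ∈ V, BadlyPlaced P b → ∀ s, ∃ a ∈ P s, a < b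

section HasBase

variable {P D : Config B S} {V : Set (Fin B)}

theorem HasBase.prefix (h : HasBase P V D) (s : Fin S) : P s <+: D s := by
  obtain ⟨R, hR, -⟩ := h s
  exact hR ▸ List.prefix_append _ _

theorem HasBase.strictlyBelow (h : HasBase P V D) {s : Fin S} {a b : Fin B} (hb : b ∈ V)
    (hab : StrictlyBelow D s a b) : StrictlyBelow P s a b := by
  obtain ⟨R, hR, hRV⟩ := h s
  obtain ⟨i, k, hik, ha, hbk⟩ := hab
  rw [hR] at ha hbk
  have hk : k < (P s).length := by
    by_contra hk
    rw [List.getElem?_append_right (by omega)] at hbk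
    exact hRV b (List.mem_of_getElem? hbk) hb
  rw [List.getElem?_append_left hk] at hbk
  rw [List.getElem?_append_left (by omega)] at ha
  exact ⟨i, k, hik, ha, hbk⟩

theorem HasBase.badlyPlaced (h : HasBase P V D) {b : Fin B} (hb : b ∈ V)
    (hbad : BadlyPlaced D b) : BadlyPlaced P b := by
  obtain ⟨s, a, hab, hbelow⟩ := hbad
  exact ⟨s, a, hab, h.strictlyBelow hb hbelow⟩

theorem HasBase.update_concat (h : HasBase P V D) {b : Fin B} (hb : b ∉ V) (t : Fin S) :
    HasBase P V (Function.update D t (D t ++ [b])) := by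
  intro s
  rcases eq_or_ne s t with rfl | hst
  · obtain ⟨R, hR, hRV⟩ := h s
    refine ⟨R ++ [b], by rw [Function.update_self, hR, List.append_assoc], ?_⟩
    simpa [or_imp, forall_and] using ⟨hRV, hb⟩
  · rw [Function.update_of_ne hst]
    exact h s

theorem HasBase.update_dropLast (h : HasBase P V D)
    (hlast : ∀ s, ∃ c ∈ V, (P s).getLast? = some c) {s : Fin S} {b : Fin B}
    (htop : (D s).getLast? = some b) (hb : b ∉ V) :
    HasBase P V (Function.update D s (D s).dropLast) := by
  intro t
  rcases eq_or_ne t s with rfl | hts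
  · obtain ⟨R, hR, hRV⟩ := h t
    have hR0 : R ≠ [] := by
      rintro rfl
      obtain ⟨c, hcV, hc⟩ := hlast t
      rw [hR, List.append_nil, hc] at htop
      exact hb (Option.some.inj htop ▸ hcV)
    exact ⟨R.dropLast, by rw [Function.update_self, hR, List.dropLast_append_of_ne_nil hR0],
      fun x hx => hRV x (List.dropLast_subset _ hx)⟩
  · rw [Function.update_of_ne hts]
    exact h t

theorem HasBase.relocNonBGIn (h : HasBase P V D)
    (hBP : ∀ b ∈ V, BadlyPlaced P b → ∀ s, ∃ a ∈ P s, a < b) {src dst : Fin S} {b : Fin B}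
    (htop : (D src).getLast? = some b) (hne : src ≠ dst) (hb : b ∈ V) :
    RelocNonBGIn V D (.relocate src dst) := by
  refine ⟨b, hb, ⟨src, dst, rfl, hne, htop⟩, fun ⟨hbad, hgood⟩ => hgood ?_⟩
  obtain ⟨a, ha, hab⟩ := hBP b hb (h.badlyPlaced hb hbad) dst
  exact badlyPlaced_applyMove_relocate htop hne ((h.prefix dst).subset ha) hab

theorem HasBase.applyMove (h : HasBase P V D) (hP : Property5Base P V) {m : Move S}
    (hm : Enabled D m) (hskip : ¬ RelocNonBGIn V D m) : HasBase P V (applyMove D m) := by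
  cases m with
  | retrieve s =>
    obtain ⟨b, htop, hmin⟩ := hm
    obtain ⟨s₀, a₀, ha₀, ha₀V⟩ := hP.exists_lt
    have hb : b ∉ V := fun hb => (hmin s₀ a₀ ((h.prefix s₀).subset ha₀)).not_gt (ha₀V b hb)
    exact h.update_dropLast hP.getLast?_mem htop hb
  | relocate src dst =>
    obtain ⟨hne, hsrc⟩ := hm
    obtain ⟨b, htop⟩ := Option.isSome_iff_exists.1 (List.getLast?_isSome.2 hsrc)
    have hb : b ∉ V := fun hb =>
      hskip (h.relocNonBGIn hP.exists_lt_of_badlyPlaced htop hne hb)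
    have h' := (h.update_dropLast hP.getLast?_mem htop hb).update_concat hb dst
    rwa [Function.update_of_ne hne.symm, ← applyMove_relocate htop hne] at h'

theorem Property5Base.one_le_countMoves (hP : Property5Base P V) :
    ∀ {ms : List (Move S)} {D : Config B S}, HasBase P V D → AllEnabled D ms →
      (∀ s, play D ms s = []) → 1 ≤ countMoves (RelocNonBGIn V) D ms
  | [], D, h, _, hend => by
    obtain ⟨s₀, a₀, ha₀, -⟩ := hP.exists_lt
    have ha₀D := (h.prefix s₀).subset ha₀
    rw [show D s₀ = [] from hend s₀] at ha₀D
    exact absurd ha₀D List.not_mem_nil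
  | m :: ms, D, h, ⟨hm, hms⟩, hend => by
    by_cases hskip : RelocNonBGIn V D m
    · simp [countMoves, hskip]
    · rw [countMoves, if_neg hskip, zero_add]
      exact hP.one_le_countMoves (h.applyMove hP hm hskip) hms hend

end HasBase

theorem VirtualLayer.exists_hasBase {C : Config B S} {V : Set (Fin B)} (hC : IsConfig C)
    (hV : VirtualLayer C V) :
    ∃ P : Config B S, HasBase P V C ∧ (∀ s, ∃ c ∈ V, (P s).getLast? = some c) ∧
      ∀ s a, AtOrBelowLayer C V s a → a ∈ P s := by
  choose v hv huniq using hV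
  choose j hj using fun s => List.mem_iff_getElem?.1 (hv s).2
  refine ⟨fun s => (C s).take (j s + 1), fun s => ⟨(C s).drop (j s + 1),
    (List.take_append_drop _ _).symm, fun x hx hxV => ?_⟩, fun s => ⟨v s, (hv s).1, ?_⟩, ?_⟩
  · obtain ⟨i, hi⟩ := List.mem_iff_getElem?.1 hx
    rw [List.getElem?_drop, huniq s x ⟨hxV, List.mem_of_getElem? hi⟩] at hi
    have := IsConfig.eq_of_getElem? hC hi (hj s)
    omega
  · simp [List.getLast?_take, hj s]
  · rintro s a ⟨b, k, hbV, hbk, ha⟩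
    rw [huniq s b ⟨hbV, List.mem_of_getElem? hbk⟩] at hbk
    rwa [IsConfig.eq_of_getElem? hC hbk (hj s)] at ha

theorem P5.exists_property5Base {C : Config B S} {V : Set (Fin B)} (hC : IsConfig C)
    (h5 : P5 C V) : ∃ P : Config B S, HasBase P V C ∧ Property5Base P V := by
  obtain ⟨hV, ⟨s₀, a₀, b₀, hb₀, hbelow, ha₀V⟩, hBP⟩ := h5
  obtain ⟨P, hPC, hlast, hbase⟩ := VirtualLayer.exists_hasBase hC hV
  refine ⟨P, hPC, hlast, ⟨s₀, a₀, hbase s₀ a₀ (StrictlyBelow.atOrBelowLayer hbelow hb₀), ha₀V⟩,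
    fun b hb hbad s => ?_⟩
  obtain ⟨a, ha, hab⟩ := hBP b hb (BadlyPlaced.of_prefix hPC.prefix hbad) s
  exact ⟨a, hbase s a ha, hab⟩

def numBlocks (D : Config B S) : ℕ := ∑ s, (D s).length

theorem numBlocks_update_add (D : Config B S) (s : Fin S) (l : List (Fin B)) :
    numBlocks (Function.update D s l) + (D s).length = numBlocks D + l.length := by
  classical
  have hrest : ∑ t ∈ Finset.univ.erase s, (Function.update D s l t).length =
      ∑ t ∈ Finset.univ.erase s, (D t).length :=
    Finset.sum_congr rfl fun t ht => by rw [Function.update_of_ne (Finset.ne_of_mem_erase ht)]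
  unfold numBlocks
  rw [← Finset.add_sum_erase _ _ (Finset.mem_univ s),
    ← Finset.add_sum_erase _ (fun t => (D t).length) (Finset.mem_univ s), hrest,
    Function.update_self]
  ring

theorem numBlocks_applyMove_retrieve {D : Config B S} {s : Fin S} (hs : D s ≠ []) :
    numBlocks (applyMove D (.retrieve s)) + 1 = numBlocks D := by
  have := numBlocks_update_add D s (D s).dropLast
  have := List.length_pos_iff.2 hs
  simp only [applyMove, List.length_dropLast] at *
  omega

theorem numBlocks_applyMove_relocate {D : Config B S} {src dst : Fin S} {b : Fin B}
    (htop : (D src).getLast? = some b) (hne : src ≠ dst) :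
    numBlocks (applyMove D (.relocate src dst)) = numBlocks D := by
  have h₁ := numBlocks_update_add D src (D src).dropLast
  have h₂ := numBlocks_update_add (Function.update D src (D src).dropLast) dst (D dst ++ [b])
  have := List.length_pos_iff.2 (List.ne_nil_of_mem (List.mem_of_getLast? htop))
  rw [Function.update_of_ne hne.symm] at h₂
  simp only [List.length_dropLast, List.length_append, List.length_singleton] at h₁ h₂
  rw [applyMove_relocate htop hne]
  omega

theorem exists_mem_of_mem_applyMove {D : Config B S} {m : Move S} {u : Fin S} {x : Fin B}
    (hx : x ∈ applyMove D m u) : ∃ t, x ∈ D t := by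
  classical
  cases m with
  | retrieve s =>
    simp only [applyMove, Function.update_apply] at hx
    split_ifs at hx with hus
    · exact ⟨s, List.dropLast_subset _ hx⟩
    · exact ⟨u, hx⟩
  | relocate src dst =>
    cases htop : (D src).getLast? with
    | none => simp only [applyMove, htop] at hx; exact ⟨u, hx⟩
    | some b =>
      simp only [applyMove, htop, Function.update_apply] at hx
      split_ifs at hx with hud hus
      · rcases List.mem_append.1 hx with hx | hx
        · exact ⟨src, List.dropLast_subset _ hx⟩
        · exact ⟨src, List.mem_singleton.1 hx ▸ List.mem_of_getLast? htop⟩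
      · rcases List.mem_append.1 hx with hx | hx
        · exact ⟨dst, hx⟩
        · exact ⟨src, List.mem_singleton.1 hx ▸ List.mem_of_getLast? htop⟩
      · exact ⟨src, List.dropLast_subset _ hx⟩
      · exact ⟨u, hx⟩

theorem exists_mem_of_mem_play {D : Config B S} {ms : List (Move S)} {u : Fin S} {x : Fin B}
    (hx : x ∈ play D ms u) : ∃ t, x ∈ D t := by
  induction ms generalizing D u with
  | nil => exact ⟨u, hx⟩
  | cons m ms ih =>
    obtain ⟨t, ht⟩ := ih hx
    exact exists_mem_of_mem_applyMove ht

theorem play_append (D : Config B S) (ms₁ ms₂ : List (Move S)) :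
    play D (ms₁ ++ ms₂) = play (play D ms₁) ms₂ := by
  induction ms₁ generalizing D with
  | nil => rfl
  | cons m ms ih => exact ih _

theorem allEnabled_append {D : Config B S} {ms₁ ms₂ : List (Move S)} (h₁ : AllEnabled D ms₁)
    (h₂ : AllEnabled (play D ms₁) ms₂) : AllEnabled D (ms₁ ++ ms₂) := by
  induction ms₁ generalizing D with
  | nil => exact h₂
  | cons m ms ih => exact ⟨h₁.1, ih h₁.2 h₂⟩

theorem relocate_replicate {s t : Fin S} (hst : s ≠ t) :
    ∀ {k : ℕ} {D : Config B S}, k ≤ (D s).length →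
      AllEnabled D (List.replicate k (.relocate s t)) ∧
      play D (List.replicate k (.relocate s t)) s = (D s).take ((D s).length - k) ∧
      numBlocks (play D (List.replicate k (.relocate s t))) = numBlocks D
  | 0, D, _ => ⟨trivial, by simp [play], rfl⟩
  | k + 1, D, hk => by
    have hne : D s ≠ [] := by
      rintro h
      simp [h] at hk
    obtain ⟨b, htop⟩ := Option.isSome_iff_exists.1 (List.getLast?_isSome.2 hne)
    have hsrc : applyMove D (.relocate s t) s = (D s).dropLast := by
      rw [applyMove_relocate htop hst, Function.update_of_ne hst, Function.update_self]
    obtain ⟨hen, htake, hnum⟩ := relocate_replicate hst (k := k) (D := applyMove D (.relocate s t))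
      (by rw [hsrc, List.length_dropLast]; omega)
    refine ⟨⟨⟨hst, hne⟩, hen⟩, ?_, ?_⟩
    · rw [List.replicate_succ, play, htake, hsrc, List.dropLast_eq_take, List.length_take,
        List.take_take]
      congr 1
      omega
    · exact hnum.trans (numBlocks_applyMove_relocate htop hst)

theorem exists_feasible (hS : 2 ≤ S) (D : Config B S) : ∃ ms, Feasible D ms := by
  by_cases hempty : ∀ s, D s = []
  · exact ⟨[], trivial, hempty⟩
  push Not at hempty
  obtain ⟨s, hs⟩ := hempty
  obtain ⟨x, ⟨s, hxs⟩, hxmin⟩ := wellFounded_lt.has_min {x | ∃ s, x ∈ D s}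
    ⟨_, s, List.getLast_mem hs⟩
  obtain ⟨l₁, l₂, hsplit⟩ := List.append_of_mem hxs
  obtain ⟨t, hts⟩ := Fintype.exists_ne_of_one_lt_card (by simp; omega) s
  obtain ⟨hen, htake, hnum⟩ := relocate_replicate hts.symm (k := l₂.length) (D := D)
    (by simp [hsplit]; omega)
  generalize hD₁ : play D (List.replicate l₂.length (.relocate s t)) = D₁ at htake hnum
  have htop : (D₁ s).getLast? = some x := by
    rw [htake, hsplit, List.append_cons, List.take_left' (by simp; omega)]
    exact List.getLast?_concat
  have hretrieve : Enabled D₁ (.retrieve s) :=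
    ⟨x, htop, fun u y hy => not_lt.1 (hxmin y (exists_mem_of_mem_play (hD₁ ▸ hy)))⟩
  have hdec := numBlocks_applyMove_retrieve (List.ne_nil_of_mem (List.mem_of_getLast? htop))
  obtain ⟨ms, hms, hend⟩ := exists_feasible hS (applyMove D₁ (.retrieve s))
  refine ⟨_ ++ .retrieve s :: ms, allEnabled_append hen (hD₁ ▸ ⟨hretrieve, hms⟩), fun u => ?_⟩
  rw [play_append, hD₁]
  exact hend u
termination_by numBlocks D
decreasing_by omega

end Relocation

theorem brp_property5_general {B S : ℕ} (hS : 2 ≤ S)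
    (C : Config B S) (hC : IsConfig C)
    (V : Set (Fin B)) (h5 : P5 C V) :
    (∀ ms, Feasible C ms → 1 ≤ countMoves (RelocNonBGIn V) C ms) ∧
    1 ≤ fNonBG C V := by
  obtain ⟨P, hPC, hP⟩ := P5.exists_property5Base hC h5
  have hcount (ms : List (Move S)) (hms : Feasible C ms) :
      1 ≤ countMoves (RelocNonBGIn V) C ms :=
    hP.one_le_countMoves hPC hms.1 hms.2
  -- `fNonBG` is an `sInf`, which would be `0` if no feasible sequence existed.
  obtain ⟨ms, hms⟩ := exists_feasible hS C
  exact ⟨hcount, le_csInf ⟨_, ms, hms, rfl⟩ fun n ⟨ms, hms, hn⟩ => hn ▸ hcount ms hms⟩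

/-- Theorem 3, Property 5: if every stack is nonempty and `V` is a
virtual layer satisfying the conditions of Property 5, then every feasible move
sequence contains at least one non-BG relocation of a block of `V`; that is,
`f_nonBG(V) ≥ 1`. -/
theorem brp_property5 {B S : ℕ} (hS : 2 ≤ S) (hB : 1 ≤ B)
    (C : Config B S) (hC : IsConfig C) (hne : ∀ s, C s ≠ [])
    (V : Set (Fin B)) (h5 : P5 C V) :
    (∀ ms, Feasible C ms → 1 ≤ countMoves (RelocNonBGIn V) C ms) ∧
    1 ≤ fNonBG C V :=
  brp_property5_general hS C hC V h5
end

section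
/- (Corollary 2) Let C be an initial configuration of the BRP in which every stack holds at least k blocks, and suppose the top k layers 𝔅³ of C satisfy the conditions of Property 3, i.e., (1) the block of minimum label does not belong to 𝔅³ and (2) every badly placed block of 𝔅³ has a label strictly greater than the minimum label remaining in stack s after deleting the topmost k−1 blocks of s, for every stack s. Then every virtual layer V of C all of whose blocks belong to 𝔅³ satisfies the conditions of Property 5. In particular, the top 1st, 2nd, …, kth layers are k pairwise disjoint virtual layers each satisfying the conditions of Property 5. -/
section AuxBRP
variable {B S : ℕ}

lemma brp_count_le_one {C : Config B S} (hC : IsConfig C)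
    (b : Fin B) (s : Fin S) : (C s).count b ≤ 1 := by
  have h := hC b
  calc (C s).count b ≤ ∑ s' : Fin S, (C s').count b :=
        Finset.single_le_sum (f := fun s' => (C s').count b)
          (fun _ _ => Nat.zero_le _) (Finset.mem_univ s)
    _ = 1 := h

lemma brp_mem_stack_unique {C : Config B S} (hC : IsConfig C)
    {b : Fin B} {s s' : Fin S} (h : b ∈ C s) (h' : b ∈ C s') : s = s' := by
  by_contra hne
  have h1 : 1 ≤ (C s).count b := List.count_pos_iff.mpr h
  have h2 : 1 ≤ (C s').count b := List.count_pos_iff.mpr h'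
  have hle : (C s).count b + (C s').count b ≤ ∑ s'' : Fin S, (C s'').count b := by
    rw [← Finset.sum_pair (f := fun s'' => (C s'').count b) hne]
    exact Finset.sum_le_sum_of_subset (Finset.subset_univ _)
  rw [hC b] at hle
  omega

lemma brp_two_le_count {l : List (Fin B)} {b : Fin B} {i j : ℕ}
    (hi : i < l.length) (hj : j < l.length) (hij : i < j)
    (h1 : l[i] = b) (h2 : l[j] = b) : 2 ≤ l.count b := by
  have hsplit : l = l.take j ++ l.drop j := (List.take_append_drop j l).symm
  have hb1 : b ∈ l.take j := by
    rw [List.mem_take_iff_getElem]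
    exact ⟨i, by omega, h1⟩
  have hb2 : b ∈ l.drop j := by
    rw [List.mem_iff_getElem]
    refine ⟨0, by simp; omega, ?_⟩
    rw [List.getElem_drop]
    simpa using h2
  calc 2 = 1 + 1 := rfl
    _ ≤ (l.take j).count b + (l.drop j).count b :=
        Nat.add_le_add (List.count_pos_iff.mpr hb1) (List.count_pos_iff.mpr hb2)
    _ = l.count b := by rw [← List.count_append, ← hsplit]

/-- A block of the top `k` layers sits at an index `≥ length - k` of its stack. -/
lemma brp_topK_index {C : Config B S} (hC : IsConfig C) {k : ℕ} {b : Fin B} {s : Fin S}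
    (hb : b ∈ TopK C k) (hbs : b ∈ C s) :
    ∃ j, (C s).length - k ≤ j ∧ j < (C s).length ∧ (C s)[j]? = some b := by
  obtain ⟨s', hs'⟩ := hb
  have hmem' : b ∈ C s' := List.drop_subset _ _ hs'
  have hss : s' = s := brp_mem_stack_unique hC hmem' hbs
  rw [hss] at hs'
  rw [List.mem_iff_getElem] at hs'
  obtain ⟨i, hi, heq⟩ := hs'
  rw [List.length_drop] at hi
  refine ⟨(C s).length - k + i, Nat.le_add_right _ _, by omega, ?_⟩
  rw [List.getElem?_eq_some_iff]
  refine ⟨by omega, ?_⟩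
  rw [List.getElem_drop] at heq
  exact heq

end AuxBRP

/-- Corollary 2: if the top `k` layers `𝔅³` satisfy the conditions
of Property 3, then every virtual layer contained in `𝔅³` satisfies the
conditions of Property 5; in particular the top 1st, …, kth layers are `k`
pairwise disjoint virtual layers each satisfying the conditions of Property 5. -/
theorem brp_property6_subsumes_property3 {B S : ℕ} (hS : 2 ≤ S) (hB : 1 ≤ B)
    (C : Config B S) (hC : IsConfig C)
    (k : ℕ) (hk1 : 1 ≤ k) (hk : ∀ s, k ≤ (C s).length)
    (t : Fin B) (ht : ∀ b, t ≤ b) (htout : t ∉ TopK C k)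
    (hcond : ∀ b ∈ TopK C k, BadlyPlaced C b →
      ∀ s : Fin S, ∃ a ∈ (C s).take ((C s).length - (k - 1)), a < b) :
    (∀ V : Set (Fin B), VirtualLayer C V → V ⊆ TopK C k → P5 C V) ∧
    (∀ j, 1 ≤ j → j ≤ k → P5 C (TopJth C j)) ∧
    (∀ j j', 1 ≤ j → j < j' → j' ≤ k → Disjoint (TopJth C j) (TopJth C j')) := by
  have part1 : ∀ V : Set (Fin B), VirtualLayer C V → V ⊆ TopK C k → P5 C V := by
    intro V hV hVsub
    refine ⟨hV, ?_, ?_⟩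
    · -- condition (1): use the minimum block t
      obtain ⟨s0, hts0⟩ : ∃ s, t ∈ C s := by
        by_contra h
        push_neg at h
        have hzero : ∀ s ∈ Finset.univ, (C s).count t = 0 :=
          fun s _ => List.count_eq_zero.mpr (h s)
        have h1 := hC t
        rw [Finset.sum_eq_zero hzero] at h1
        omega
      obtain ⟨b0, ⟨hb0V, hb0s⟩, -⟩ := hV s0
      obtain ⟨j, hjk, hjlen, hjget⟩ := brp_topK_index hC (hVsub hb0V) hb0s
      have htnot : t ∉ (C s0).drop ((C s0).length - k) := fun h => htout ⟨s0, h⟩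
      have httake : t ∈ (C s0).take ((C s0).length - k) := by
        have hsplit := List.take_append_drop ((C s0).length - k) (C s0)
        rw [← hsplit] at hts0
        rcases List.mem_append.mp hts0 with h | h
        · exact h
        · exact absurd h htnot
      rw [List.mem_take_iff_getElem] at httake
      obtain ⟨i, hi, hti⟩ := httake
      refine ⟨s0, t, b0, hb0V, ⟨i, j, by omega, ?_, hjget⟩, ?_⟩
      · rw [List.getElem?_eq_some_iff]
        exact ⟨by omega, hti⟩
      · intro c hc
        exact (ht c).lt_of_ne (by rintro rfl; exact htout (hVsub hc))
    · -- condition (2)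
      intro b hbV hbbad s
      obtain ⟨a, haTake, hab⟩ := hcond b (hVsub hbV) hbbad s
      obtain ⟨v, ⟨hvV, hvs⟩, -⟩ := hV s
      obtain ⟨j, hjk, hjlen, hjget⟩ := brp_topK_index hC (hVsub hvV) hvs
      refine ⟨a, ⟨v, j, hvV, hjget, ?_⟩, hab⟩
      have hmono : (C s).length - (k - 1) ≤ j + 1 := by
        have := hk s; omega
      have hrw : (C s).take ((C s).length - (k - 1)) =
          ((C s).take (j + 1)).take ((C s).length - (k - 1)) := by
        rw [List.take_take, Nat.min_eq_left hmono]
      rw [hrw] at haTake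
      exact List.take_subset _ _ haTake
  have hlayer : ∀ j, 1 ≤ j → j ≤ k → VirtualLayer C (TopJth C j) := by
    intro j hj1 hjk s
    have hlen : (C s).length - j < (C s).length := by have := hk s; omega
    refine ⟨(C s)[(C s).length - j], ⟨⟨s, ?_⟩, List.getElem_mem hlen⟩, ?_⟩
    · rw [List.getElem?_eq_some_iff]
      exact ⟨hlen, rfl⟩
    · rintro b' ⟨⟨s', hs'⟩, hb's⟩
      rw [List.getElem?_eq_some_iff] at hs'
      obtain ⟨h1, h2⟩ := hs'
      have hb'mem : b' ∈ C s' := h2 ▸ List.getElem_mem h1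
      have hss : s' = s := brp_mem_stack_unique hC hb'mem hb's
      subst hss
      exact h2.symm
  have hsubK : ∀ j, 1 ≤ j → j ≤ k → TopJth C j ⊆ TopK C k := by
    intro j hj1 hjk b hb
    obtain ⟨s, hs⟩ := hb
    rw [List.getElem?_eq_some_iff] at hs
    obtain ⟨h1, h2⟩ := hs
    have hks := hk s
    refine ⟨s, ?_⟩
    rw [List.mem_iff_getElem?]
    refine ⟨(C s).length - j - ((C s).length - k), ?_⟩
    rw [List.getElem?_drop,
      show (C s).length - k + ((C s).length - j - ((C s).length - k)) = (C s).length - j by omega,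
      List.getElem?_eq_some_iff]
    exact ⟨h1, h2⟩
  refine ⟨part1, fun j hj1 hjk => part1 _ (hlayer j hj1 hjk) (hsubK j hj1 hjk), ?_⟩
  intro j j' hj1 hjj' hj'k
  rw [Set.disjoint_left]
  rintro b ⟨s, hs⟩ ⟨s', hs'⟩
  have hmem : b ∈ C s := by
    obtain ⟨h1, h2⟩ := List.getElem?_eq_some_iff.mp hs
    exact h2 ▸ List.getElem_mem h1
  have hmem' : b ∈ C s' := by
    obtain ⟨h1, h2⟩ := List.getElem?_eq_some_iff.mp hs'
    exact h2 ▸ List.getElem_mem h1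
  have hss : s' = s := brp_mem_stack_unique hC hmem' hmem
  rw [hss] at hs'
  obtain ⟨h1, h2⟩ := List.getElem?_eq_some_iff.mp hs
  obtain ⟨h1', h2'⟩ := List.getElem?_eq_some_iff.mp hs'
  have hks := hk s
  have hcount := brp_count_le_one hC b s
  have h2le : 2 ≤ (C s).count b := brp_two_le_count h1' h1 (by omega) h2' h2
  omega
end
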